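/- Let β ≥ 1 and x₁,…,x_m ≥ 0 with exponents b₁,…,b_m ≥ 0 summing to s ≥ 1 where each b_i ≥ (s−1)/m. Then (1/m!) ∑_{σ ∈ S_m} x_{σ(1)}^{b₁}⋯x_{σ(m)}^{b_m} ≤ ((x₁+⋯+x_m)/m)^s, i.e. the symmetric mean of the monomials is at most the s-th power of the arithmetic mean. -/

import Mathlib

/-! Write `t = (s - 1) / m` and `c i = b i - t`, so that `c ≥ 0` and `∑ c = 1`. Each monomial
splits as `(∏ x) ^ t * ∏ x (σ i) ^ c i`, and weighted AM-GM bounds the second factor by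
`∑ c i * x (σ i)`, whose average over `σ` is the arithmetic mean `A` of the `x i`. Finally
unweighted AM-GM gives `(∏ x) ^ t ≤ A ^ (m t) = A ^ (s - 1)`. -/

open Finset Real

section PermAverage

variable {α M : Type*} [Fintype α] [DecidableEq α] [AddCommMonoid M]

theorem Equiv.Perm.sum_apply_eq_sum_apply (f : α → M) (i j : α) :
    ∑ σ : Equiv.Perm α, f (σ i) = ∑ σ : Equiv.Perm α, f (σ j) := by
  refine (Equiv.sum_comp (Equiv.mulRight (Equiv.swap i j)) fun σ => f (σ i)).symm.trans ?_
  simp only [Equiv.coe_mulRight, Equiv.Perm.mul_apply, Equiv.swap_apply_left]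

theorem Equiv.Perm.card_smul_sum_apply (f : α → M) (i : α) :
    Fintype.card α • ∑ σ : Equiv.Perm α, f (σ i)
      = (Fintype.card α).factorial • ∑ j, f j :=
  calc Fintype.card α • ∑ σ : Equiv.Perm α, f (σ i)
      = ∑ j : α, ∑ σ : Equiv.Perm α, f (σ j) := by
        rw [← card_univ, ← sum_const]
        exact sum_congr rfl fun j _ => sum_apply_eq_sum_apply f i j
    _ = ∑ σ : Equiv.Perm α, ∑ j, f j := by
        rw [sum_comm]
        exact sum_congr rfl fun σ _ => Equiv.sum_comp σ f
    _ = (Fintype.card α).factorial • ∑ j, f j := by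
        rw [sum_const, card_univ, Fintype.card_perm]

theorem Equiv.Perm.factorial_inv_mul_sum_sum_mul_apply {K : Type*} [Field K] [CharZero K]
    (c f : α → K) :
    ((Fintype.card α).factorial : K)⁻¹ * ∑ σ : Equiv.Perm α, ∑ i, c i * f (σ i)
      = (∑ i, c i) * ((∑ j, f j) / Fintype.card α) := by
  rw [sum_comm, mul_sum, sum_mul]
  refine sum_congr rfl fun i _ => ?_
  have : Nonempty α := ⟨i⟩
  have hcard : (Fintype.card α : K) ≠ 0 := Nat.cast_ne_zero.2 Fintype.card_ne_zero
  have hfac : ((Fintype.card α).factorial : K) ≠ 0 :=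
    Nat.cast_ne_zero.2 (Nat.factorial_ne_zero _)
  have key := card_smul_sum_apply f i
  simp only [nsmul_eq_mul] at key
  rw [← mul_sum]
  field_simp
  linear_combination c i * key

end PermAverage

namespace Real

variable {ι : Type*}

theorem prod_rpow_const_add (s : Finset ι) {x c : ι → ℝ} {t : ℝ}
    (hx : ∀ i ∈ s, 0 ≤ x i) (ht : 0 ≤ t) (hc : ∀ i ∈ s, 0 ≤ c i) :
    ∏ i ∈ s, x i ^ (t + c i) = (∏ i ∈ s, x i) ^ t * ∏ i ∈ s, x i ^ c i := by
  rw [← finsetProd_rpow s x hx, ← prod_mul_distrib]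
  exact prod_congr rfl fun i hi => rpow_add_of_nonneg (hx i hi) ht (hc i hi)

theorem prod_rpow_const_add_le (s : Finset ι) {x c : ι → ℝ} {t : ℝ}
    (hx : ∀ i ∈ s, 0 ≤ x i) (ht : 0 ≤ t) (hc : ∀ i ∈ s, 0 ≤ c i)
    (hc1 : ∑ i ∈ s, c i = 1) :
    ∏ i ∈ s, x i ^ (t + c i) ≤ (∏ i ∈ s, x i) ^ t * ∑ i ∈ s, c i * x i := by
  rw [prod_rpow_const_add s hx ht hc]
  gcongr
  · exact rpow_nonneg (prod_nonneg hx) t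
  · exact geom_mean_le_arith_mean_weighted s c x hc hc1 hx

theorem prod_rpow_le_mean_rpow [Fintype ι] [Nonempty ι] {x : ι → ℝ} (hx : ∀ i, 0 ≤ x i)
    {t : ℝ} (ht : 0 ≤ t) :
    (∏ i, x i) ^ t ≤ ((∑ i, x i) / Fintype.card ι) ^ (Fintype.card ι * t) := by
  have hcard : (0 : ℝ) < Fintype.card ι := Nat.cast_pos.2 Fintype.card_pos
  have amgm := geom_mean_le_arith_mean univ (fun _ => 1) x (fun _ _ => zero_le_one)
    (by simpa using hcard) (fun i _ => hx i)
  simp only [rpow_one, one_mul, sum_const, card_univ, nsmul_eq_mul, mul_one] at amgm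
  have hprod : 0 ≤ ∏ i, x i := prod_nonneg fun i _ => hx i
  calc (∏ i, x i) ^ t
      = ((∏ i, x i) ^ (Fintype.card ι : ℝ)⁻¹) ^ (Fintype.card ι * t) := by
        rw [← rpow_mul hprod, inv_mul_cancel_left₀ hcard.ne']
    _ ≤ ((∑ i, x i) / Fintype.card ι) ^ (Fintype.card ι * t) := by
        gcongr

end Real

theorem symmetric_mean_bound_general
    (m : ℕ) (b x : Fin m → ℝ)
    (hs : 1 ≤ ∑ i, b i)
    (hbal : ∀ i, (∑ j, b j - 1) / m ≤ b i)
    (hx : ∀ i, 0 ≤ x i) :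
    (1 / (Nat.factorial m : ℝ)) * ∑ σ : Equiv.Perm (Fin m), ∏ i, (x (σ i)) ^ (b i)
      ≤ ((∑ i, x i) / m) ^ (∑ i, b i) := by
  have hm : m ≠ 0 := by rintro rfl; norm_num at hs
  have : NeZero m := ⟨hm⟩
  set s := ∑ i, b i
  set t := (s - 1) / m
  set A := (∑ i, x i) / m
  set c : Fin m → ℝ := fun i => b i - t
  have hmt : (m : ℝ) * t = s - 1 := mul_div_cancel₀ _ (Nat.cast_ne_zero.2 hm)
  have ht : 0 ≤ t := div_nonneg (by linarith) m.cast_nonneg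
  have hc : ∀ i, 0 ≤ c i := fun i => sub_nonneg.2 (hbal i)
  have hc1 : ∑ i, c i = 1 := by
    simp only [c, sum_sub_distrib, sum_const, card_univ, Fintype.card_fin, nsmul_eq_mul]
    linarith
  have hbc : b = fun i => t + c i := funext fun i => (add_sub_cancel t (b i)).symm
  have hA : 0 ≤ A := div_nonneg (sum_nonneg fun i _ => hx i) m.cast_nonneg
  calc (1 / (m.factorial : ℝ)) * ∑ σ : Equiv.Perm (Fin m), ∏ i, x (σ i) ^ b i
      ≤ (1 / (m.factorial : ℝ)) *
          ∑ σ : Equiv.Perm (Fin m), (∏ i, x i) ^ t * ∑ i, c i * x (σ i) := by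
        gcongr with σ
        rw [hbc, ← Equiv.prod_comp σ x]
        exact prod_rpow_const_add_le univ (fun i _ => hx _) ht (fun i _ => hc i) hc1
    _ = (∏ i, x i) ^ t * A := by
        have avg := Equiv.Perm.factorial_inv_mul_sum_sum_mul_apply c x
        rw [Fintype.card_fin, hc1, one_mul] at avg
        rw [← mul_sum, one_div, mul_left_comm, avg]
    _ ≤ A ^ (s - 1) * A := by
        gcongr
        simpa [hmt] using prod_rpow_le_mean_rpow hx ht
    _ = A ^ s := by rw [← rpow_add_one' hA (by linarith), sub_add_cancel]

theorem symmetric_mean_bound (β : ℝ) (hβ : 1 ≤ β)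
    (m : ℕ) (hm : 1 ≤ m) (b x : Fin m → ℝ)
    (hb : ∀ i, 0 ≤ b i) (hs : 1 ≤ ∑ i, b i)
    (hbal : ∀ i, (∑ j, b j - 1) / m ≤ b i)
    (hx : ∀ i, 0 ≤ x i) :
    (1 / (Nat.factorial m : ℝ)) * ∑ σ : Equiv.Perm (Fin m), ∏ i, (x (σ i)) ^ (b i)
      ≤ ((∑ i, x i) / m) ^ (∑ i, b i) :=
  symmetric_mean_bound_general m b x hs hbal hx
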